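/- (Menshikov–Volkov criterion, easy direction) Suppose the BMC (X,P,μ) is not strongly recurrent. Fix o ∈ X and define g(x) := P_x(no particle ever visits o) for x ≠ o and g(o) := 0. Then 0 < g(y) ≤ 1 for some y, and g satisfies Ψ(x, Pg(x)) ≥ g(x) for all x ≠ o, where Ψ(x,z) := ∑_{k≥1} z^k μ_k(x) is the offspring generating function and Pg(x) := ∑_y p(x,y) g(y). -/

import Mathlib

open Filter MeasureTheory ProbabilityTheory
open scoped Classical ENNReal

/-- `n`-step transition probabilities of a kernel `q` on a countable state space. -/
noncomputable def kpow {X : Type*} (q : X → X → ℝ) : ℕ → X → X → ℝ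
  | 0, x, y => if x = y then 1 else 0
  | n + 1, x, y => ∑' z : X, q x z * kpow q n z y

/-- The spectral radius `ρ(P) = limsup_n (p^{(n)}(x,x))^{1/n}` (computed at base point `x`). -/
noncomputable def specRad {X : Type*} (q : X → X → ℝ) (x : X) : ℝ :=
  Filter.atTop.limsup fun n : ℕ => (kpow q n x x) ^ ((n : ℝ)⁻¹)

/-- The measure on a countable discrete space with mass `f y` at the point `y`. -/
noncomputable def rowMeasure {Y : Type*} [MeasurableSpace Y] (f : Y → ℝ) : Measure Y :=
  Measure.sum fun y => (ENNReal.ofReal (f y)) • Measure.dirac y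

/-- Canonical probabilistic model of a branching Markov chain `(X,P,μ)` with Ulam–Harris
labelling of particles: `cnt u x` is the number of offspring of particle `u` when `u` is
located at `x` (with law `μ(x)`), and `step (i :: u) x` is the position of the `i`-th child
of a particle `u` located at `x` (with law `p(x,·)`); all this randomness is independent. -/
structure BMC (X : Type*) [MeasurableSpace X] (p : X → X → ℝ) (μ : X → ℕ → ℝ)
    (Ω : Type*) [MeasurableSpace Ω] (Pm : Measure Ω) where
  step : List ℕ → X → Ω → X
  cnt : List ℕ → X → Ω → ℕ
  meas_step : ∀ u x, Measurable (step u x)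
  meas_cnt : ∀ u x, Measurable (cnt u x)
  indep : iIndepFun
      (fun (ux : List ℕ × X) ω => (step ux.1 ux.2 ω, cnt ux.1 ux.2 ω)) Pm
  law : ∀ u x, Measure.map (fun ω => (step u x ω, cnt u x ω)) Pm
      = Measure.prod (rowMeasure (p x)) (rowMeasure (μ x))

namespace BMC

variable {X : Type*} [MeasurableSpace X] {p : X → X → ℝ} {μ : X → ℕ → ℝ}
  {Ω : Type*} [MeasurableSpace Ω] {Pm : Measure Ω}

/-- Position of the particle with label `u` in the BMC started with one particle at `x0`
(the particle `u` lives at time `u.length`). -/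
def pos (M : BMC X p μ Ω Pm) (x0 : X) : List ℕ → Ω → X
  | [], _ => x0
  | i :: u, ω => M.step (i :: u) (M.pos x0 u ω) ω

/-- Whether the particle with label `u` is ever born in the BMC started at `x0`. -/
def alive (M : BMC X p μ Ω Pm) (x0 : X) : List ℕ → Ω → Prop
  | [], _ => True
  | i :: u, ω => M.alive x0 u ω ∧ i < M.cnt u (M.pos x0 u ω) ω

/-- The event that, starting with one particle at `x0`, the state `y` is visited by
particles infinitely many times. -/
def visitsInf (M : BMC X p μ Ω Pm) (x0 y : X) : Set Ω :=
  {ω | {u : List ℕ | M.alive x0 u ω ∧ M.pos x0 u ω = y}.Infinite}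

/-- `α(x)`: the probability that `x` is visited infinitely often, starting with one
particle at `x`. -/
noncomputable def alpha (M : BMC X p μ Ω Pm) (x : X) : ℝ :=
  (Pm (M.visitsInf x x)).toReal

/-- The first time `n ≥ 1` at which some particle of the BMC started at `x0` is located
at `y` (`T_y`), as a set-indexed family of events `{T_y > n}` would be derived from it. -/
noncomputable def hittingTimeExp (M : BMC X p μ Ω Pm) (x0 y : X) : ℝ≥0∞ :=
  ∑' n : ℕ, Pm {ω | ∀ u : List ℕ, M.alive x0 u ω → 1 ≤ u.length → u.length ≤ n →
    M.pos x0 u ω ≠ y}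

end BMC

/-- Mean offspring number `m(x)` of the offspring law `μ(x)`. -/
noncomputable def meanOff {X : Type*} (μ : X → ℕ → ℝ) (x : X) : ℝ :=
  ∑' k : ℕ, (k : ℝ) * μ x k

/-!
Write `a n w z` for the probability that no particle of generation `≥ n` of the BMC started at
`z` sits at `w`, so that `g = a 0 o`. Conditioning on the offspring number of the root and on
the positions of its children, whose subtrees are independent copies of the BMC, gives
`a (n + 1) w z = Ψ(z, P (a n w) z)`. For `w = o` and `z ≠ o`, where `a 0 o z = a 1 o z`, this is
the claimed inequality, even with equality.

If `g` vanished, `o` would be hit almost surely from every state. Restarting the BMC at its first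
visit to `y` gives `a 0 w z ≤ a 0 y z + a 0 w y`, which propagates "hit almost surely from every
state" along every edge `y → w` with `p y w > 0`, hence by irreducibility to every state `x`. The
recursion, with `μ x 0 = 0`, then shows that `x` is visited in arbitrarily late generations almost
surely, i.e. `α x = 1` for all `x`: the BMC would be strongly recurrent.
-/

section rowMeasure

variable {Y : Type*} [MeasurableSpace Y]

lemma rowMeasure_univ (f : Y → ℝ) : rowMeasure f Set.univ = ∑' y, ENNReal.ofReal (f y) := by
  simp [rowMeasure, Measure.sum_apply _ MeasurableSet.univ]

lemma rowMeasure_singleton [MeasurableSingletonClass Y] (f : Y → ℝ) (y : Y) :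
    rowMeasure f {y} = ENNReal.ofReal (f y) := by
  rw [rowMeasure, Measure.sum_apply _ (measurableSet_singleton y), tsum_eq_single y]
  · simp
  · intro z hz
    simp [Measure.dirac_apply' _ (measurableSet_singleton y), Ne.symm hz]

lemma isProbabilityMeasure_rowMeasure {f : Y → ℝ} (h0 : ∀ y, 0 ≤ f y) (h1 : HasSum f 1) :
    IsProbabilityMeasure (rowMeasure f) :=
  ⟨by rw [rowMeasure_univ, ← ENNReal.ofReal_tsum_of_nonneg h0 h1.summable, h1.tsum_eq,
    ENNReal.ofReal_one]⟩

lemma tsum_ofReal_eq_one (f : Y → ℝ) [IsProbabilityMeasure (rowMeasure f)] :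
    ∑' y, ENNReal.ofReal (f y) = 1 := by
  rw [← rowMeasure_univ, measure_univ]

end rowMeasure

section CountableIndex

variable {Ω X : Type*} {m : MeasurableSpace Ω} [Countable X] [MeasurableSpace X]
  [MeasurableSingletonClass X] {h : Ω → X}

lemma measurable_apply_of_countable {α : Type*} [MeasurableSpace α] (hh : Measurable h)
    {F : X → Ω → α} (hF : ∀ x, Measurable (F x)) : Measurable fun ω => F (h ω) ω :=
  (measurable_from_prod_countable_left (f := fun q : Ω × X => F q.2 q.1) hF).comp
    (measurable_id.prodMk hh)

lemma measurableSet_apply_of_countable (hh : Measurable h) {A : X → Set Ω}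
    (hA : ∀ x, MeasurableSet (A x)) : MeasurableSet {ω | ω ∈ A (h ω)} := by
  have : {ω | ω ∈ A (h ω)} = ⋃ x, h ⁻¹' {x} ∩ A x := by ext; simp
  rw [this]
  exact .iUnion fun x => (hh (measurableSet_singleton x)).inter (hA x)

end CountableIndex

lemma iIndepFun_cond {Ω β : Type*} {mΩ : MeasurableSpace Ω} [MeasurableSpace β] {P : Measure Ω}
    [IsProbabilityMeasure P] {f g : Ω → β} (h : IndepFun f g P) :
    iIndepFun (fun b ω => cond b (g ω) (f ω)) P := by
  rw [iIndepFun_iff_measure_inter_preimage_eq_mul]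
  intro S sets hsets
  have hS : S = ∅ ∨ S = {false} ∨ S = {true} ∨ S = {false, true} := by
    clear hsets; revert S; decide
  rcases hS with rfl | rfl | rfl | rfl
  · simp
  · simp
  · simp
  · simp only [Finset.mem_insert, Finset.mem_singleton, Set.iInter_iInter_eq_or_left,
      Set.iInter_iInter_eq_left, cond_false, cond_true]
    rw [Finset.prod_pair Bool.false_ne_true]
    exact h.measure_inter_preimage_eq_mul _ _ (hsets false (by simp)) (hsets true (by simp))

lemma ENNReal.tsum_mul_pow_le_self {a : ℕ → ℝ≥0∞} (ha0 : a 0 = 0) (ha : ∑' k, a k = 1)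
    {q : ℝ≥0∞} (hq : q ≤ 1) : ∑' k, a k * q ^ k ≤ q :=
  calc ∑' k, a k * q ^ k ≤ ∑' k, a k * q := by
        refine ENNReal.tsum_le_tsum fun k => ?_
        rcases k with _ | k
        · simp [ha0]
        · exact mul_le_mul_right (pow_le_of_le_one zero_le hq k.succ_ne_zero) _
    _ = q := by rw [ENNReal.tsum_mul_right, ha, one_mul]

section MarkovChain

variable {X : Type*} {p : X → X → ℝ}

lemma kpow_nonneg (hp0 : ∀ x y, 0 ≤ p x y) : ∀ k x y, 0 ≤ kpow p k x y
  | 0, x, y => by rw [kpow]; split_ifs <;> norm_num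
  | k + 1, x, y => tsum_nonneg fun z => mul_nonneg (hp0 x z) (kpow_nonneg hp0 k z y)

lemma reflTransGen_of_kpow_pos (hp0 : ∀ x y, 0 ≤ p x y) :
    ∀ {k : ℕ} {x y : X}, 0 < kpow p k x y → Relation.ReflTransGen (fun a b => 0 < p a b) x y
  | 0, x, y, h => by
    rw [kpow] at h
    split_ifs at h with hxy
    · exact hxy ▸ .refl
    · exact absurd h (lt_irrefl 0)
  | k + 1, x, y, h => by
    obtain ⟨c, hc⟩ : ∃ c, p x c * kpow p k c y ≠ 0 := by
      by_contra! hzero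
      exact h.ne' (by rw [kpow]; simp [hzero])
    obtain ⟨hpc, hkc⟩ := mul_ne_zero_iff.1 hc
    exact .head ((hp0 x c).lt_of_ne' hpc)
      (reflTransGen_of_kpow_pos hp0 ((kpow_nonneg hp0 k c y).lt_of_ne' hkc))

end MarkovChain

/-- All the randomness of a branching Markov chain at once: `f (u, x)` is the pair (position of
the particle `u` when its parent sits at `x`, number of children of `u` when it sits at `x`),
as in the fields `step` and `cnt` of `BMC`. -/
abbrev BranchingSample (X : Type*) := List ℕ × X → X × ℕ

/-- A well-order on labels in which every predecessor of `v` lies in a generation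
`≤ v.length`, so that whether `v` is a first visit is decided by the first generations. -/
def labelRank (v : List ℕ) : ℕ ×ₗ ℕ := toLex (v.length, Encodable.encode v)

lemma labelRank_injective : Function.Injective labelRank := fun _ _ h =>
  Encodable.encode_injective (congrArg (fun r => (ofLex r).2) h)

lemma length_le_of_labelRank_lt {v v' : List ℕ} (h : labelRank v' < labelRank v) :
    v'.length ≤ v.length :=
  (Prod.Lex.toLex_lt_toLex'.1 h).1

namespace BranchingSample

variable {X : Type*}

def pos (f : BranchingSample X) (y : X) : List ℕ → X
  | [] => y
  | i :: u => (f (i :: u, pos f y u)).1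

def alive (f : BranchingSample X) (y : X) : List ℕ → Prop
  | [] => True
  | i :: u => alive f y u ∧ i < (f (u, pos f y u)).2

/-- The sample of the subtree of the particle `v`, relabelled so that `v` becomes the root. -/
def shift (f : BranchingSample X) (v : List ℕ) : BranchingSample X := fun j => f (j.1 ++ v, j.2)

def avoids (n : ℕ) (w y : X) : Set (BranchingSample X) :=
  {f | ∀ u, f.alive y u → n ≤ u.length → f.pos y u ≠ w}

def Visits (f : BranchingSample X) (z y : X) (v : List ℕ) : Prop := f.alive z v ∧ f.pos z v = y

def IsFirstVisit (f : BranchingSample X) (z y : X) (v : List ℕ) : Prop :=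
  f.Visits z y v ∧ ∀ v', labelRank v' < labelRank v → ¬ f.Visits z y v'

variable (f : BranchingSample X)

lemma shift_nil : f.shift [] = f := by
  funext j
  simp [shift]

lemma pos_shift (z : X) (v : List ℕ) : ∀ u, (f.shift v).pos (f.pos z v) u = f.pos z (u ++ v)
  | [] => rfl
  | i :: u => by simp only [pos, shift, List.cons_append, pos_shift z v u]

lemma alive_append (z : X) (v : List ℕ) :
    ∀ u, f.alive z (u ++ v) ↔ f.alive z v ∧ (f.shift v).alive (f.pos z v) u
  | [] => by simp [alive]
  | i :: u => by
    simp only [List.cons_append, alive, alive_append z v u, pos_shift, shift, and_assoc]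

lemma mem_avoids_succ_iff {n : ℕ} {w z : X} :
    f ∈ avoids (n + 1) w z ↔ ∀ i < (f ([], z)).2, f.shift [i] ∈ avoids n w (f ([i], z)).1 := by
  constructor
  · intro hf i hi u hu hn
    rw [show (f ([i], z)).1 = f.pos z [i] from rfl, pos_shift]
    refine hf (u ++ [i]) ((f.alive_append z [i] u).2 ⟨⟨trivial, hi⟩, hu⟩) ?_
    simpa using hn
  · intro hf u hu hn
    obtain ⟨u, i, rfl⟩ := (List.eq_nil_or_concat u).resolve_left (by rintro rfl; simp at hn)
    rw [List.concat_eq_append] at hu hn ⊢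
    obtain ⟨⟨-, hi⟩, hu⟩ := (f.alive_append z [i] u).1 hu
    rw [← pos_shift]
    exact hf i hi u hu (by simpa using hn)

lemma avoids_zero_eq_avoids_one {w z : X} (h : z ≠ w) : avoids 0 w z = avoids 1 w z := by
  ext f
  refine ⟨fun hf u hu _ => hf u hu (Nat.zero_le _), fun hf u hu _ => ?_⟩
  rcases u with _ | ⟨i, u⟩
  · exact h
  · exact hf _ hu (by simp)

lemma exists_isFirstVisit {z y : X} (h : ∃ v, f.Visits z y v) : ∃ v, f.IsFirstVisit z y v := by
  obtain ⟨v, hv, hmin⟩ := (InvImage.wf labelRank wellFounded_lt).has_min {v | f.Visits z y v} h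
  exact ⟨v, hv, fun v' hlt hv' => hmin v' hv' hlt⟩

lemma IsFirstVisit.eq {f : BranchingSample X} {z y : X} {v v' : List ℕ}
    (h : f.IsFirstVisit z y v) (h' : f.IsFirstVisit z y v') : v = v' := by
  rcases lt_trichotomy (labelRank v) (labelRank v') with hlt | heq | hgt
  · exact absurd h.1 (h'.2 v hlt)
  · exact labelRank_injective heq
  · exact absurd h'.1 (h.2 v' hgt)

lemma mem_avoids_or_exists_isFirstVisit {w z : X} (hf : f ∈ avoids 0 w z) (y : X) :
    f ∈ avoids 0 y z ∨ ∃ v, f.IsFirstVisit z y v ∧ f.shift v ∈ avoids 0 w y := by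
  by_cases hy : f ∈ avoids 0 y z
  · exact .inl hy
  simp only [avoids, Set.mem_ofPred_eq, not_forall, not_not] at hy
  obtain ⟨v, hv⟩ := f.exists_isFirstVisit (by obtain ⟨v, hv, -, hpos⟩ := hy; exact ⟨v, hv, hpos⟩)
  refine .inr ⟨v, hv, fun u hu _ => ?_⟩
  obtain ⟨halive, hpos⟩ := hv.1
  rw [← hpos, pos_shift]
  exact hf (u ++ v) ((f.alive_append z v u).2 ⟨halive, hpos ▸ hu⟩) (Nat.zero_le _)

section Measurability

variable [Countable X] [MeasurableSpace X] [MeasurableSingletonClass X]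
  {Ω : Type*} {m : MeasurableSpace Ω} {L : Ω → BranchingSample X} {N : ℕ}

lemma measurable_pos
    (hstep : ∀ u x, u ≠ [] → u.length ≤ N → Measurable fun ω => (L ω (u, x)).1) (y : X) :
    ∀ {u : List ℕ}, u.length ≤ N → Measurable fun ω => (L ω).pos y u
  | [], _ => measurable_const
  | i :: u, hu => measurable_apply_of_countable
      (measurable_pos hstep y (le_trans (Nat.le_succ _) hu))
      fun x => hstep (i :: u) x (List.cons_ne_nil i u) hu

lemma measurableSet_alive
    (hstep : ∀ u x, u ≠ [] → u.length ≤ N → Measurable fun ω => (L ω (u, x)).1)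
    (hcnt : ∀ u x, u.length < N → Measurable fun ω => (L ω (u, x)).2) (y : X) :
    ∀ {u : List ℕ}, u.length ≤ N → MeasurableSet {ω | (L ω).alive y u}
  | [], _ => by simp [alive]
  | i :: u, hu => (measurableSet_alive hstep hcnt y (le_trans (Nat.le_succ _) hu)).inter <|
      measurable_apply_of_countable (measurable_pos hstep y (le_trans (Nat.le_succ _) hu))
        (fun x => hcnt u x hu) measurableSet_Ioi

lemma measurableSet_visits
    (hstep : ∀ u x, u ≠ [] → u.length ≤ N → Measurable fun ω => (L ω (u, x)).1)
    (hcnt : ∀ u x, u.length < N → Measurable fun ω => (L ω (u, x)).2) (z y : X) {v : List ℕ}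
    (hv : v.length ≤ N) : MeasurableSet {ω | (L ω).Visits z y v} :=
  (measurableSet_alive hstep hcnt z hv).inter
    (measurable_pos hstep z hv (measurableSet_singleton y))

lemma measurableSet_isFirstVisit
    (hstep : ∀ u x, u ≠ [] → u.length ≤ N → Measurable fun ω => (L ω (u, x)).1)
    (hcnt : ∀ u x, u.length < N → Measurable fun ω => (L ω (u, x)).2) (z y : X) {v : List ℕ}
    (hv : v.length ≤ N) : MeasurableSet {ω | (L ω).IsFirstVisit z y v} := by
  have : {ω | (L ω).IsFirstVisit z y v} = {ω | (L ω).Visits z y v} ∩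
      ⋂ v' ∈ {v' | labelRank v' < labelRank v}, {ω | (L ω).Visits z y v'}ᶜ := by
    ext; simp [IsFirstVisit]
  rw [this]
  exact (measurableSet_visits hstep hcnt z y hv).inter <| .biInter (Set.to_countable _)
    fun v' hlt => (measurableSet_visits hstep hcnt z y
      ((length_le_of_labelRank_lt hlt).trans hv)).compl

lemma measurableSet_preimage_avoids
    (hstep : ∀ u x, u ≠ [] → Measurable fun ω => (L ω (u, x)).1)
    (hcnt : ∀ u x, Measurable fun ω => (L ω (u, x)).2) (n : ℕ) (w y : X) :
    MeasurableSet (L ⁻¹' avoids n w y) := by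
  have : L ⁻¹' avoids n w y =
      ⋂ u, {ω | (L ω).alive y u → n ≤ u.length → (L ω).pos y u ≠ w} := by
    ext; simp [avoids]
  rw [this]
  refine MeasurableSet.iInter fun u => MeasurableSet.imp ?_ (MeasurableSet.imp ?_ ?_)
  · exact measurableSet_alive (N := u.length) (fun u x hu _ => hstep u x hu)
      (fun u x _ => hcnt u x) y le_rfl
  · exact MeasurableSet.const _
  · exact (measurable_pos (N := u.length) (fun u x hu _ => hstep u x hu) y le_rfl
      (measurableSet_singleton w)).compl

lemma measurableSet_avoids (n : ℕ) (w y : X) :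
    MeasurableSet (avoids n w y : Set (BranchingSample X)) :=
  measurableSet_preimage_avoids (L := id) (fun j x _ => (measurable_pi_apply (j, x)).fst)
    (fun j x => (measurable_pi_apply (j, x)).snd) n w y

end Measurability

end BranchingSample

namespace BMC

open BranchingSample

section Coordinates

variable {X : Type*}

/-- A coordinate `((u, x), b)` is the step (`b = false`) or the offspring count (`b = true`) of
the particle `u` at `x`. These are the coordinates read by the subtree of `v`: all its counts,
and the steps below `v`. -/
def subtreeCoords (v : List ℕ) : Set ((List ℕ × X) × Bool) :=
  {j | v <:+ j.1.1 ∧ (j.1.1 = v → j.2 = true)}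

/-- The coordinates read by the generations `< N`, together with the steps into generation `N`. -/
def lowCoords (N : ℕ) : Set ((List ℕ × X) × Bool) :=
  {j | j.1.1.length < N ∨ j.1.1.length = N ∧ j.2 = false}

def branchCoords (i : ℕ) : Set ((List ℕ × X) × Bool) := {j | [i] <:+ j.1.1}

lemma disjoint_lowCoords_subtreeCoords (v : List ℕ) :
    Disjoint (lowCoords (X := X) v.length) (subtreeCoords v) := by
  refine Set.disjoint_left.2 fun j hlow ⟨hsuf, hroot⟩ => ?_
  rcases hlow with hlt | ⟨hlen, hstep⟩
  · exact absurd hsuf.length_le (not_le.2 hlt)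
  · exact Bool.false_ne_true (hstep ▸ hroot (hsuf.eq_of_length_le hlen.le).symm)

lemma pairwiseDisjoint_branchCoords (s : Set ℕ) :
    s.PairwiseDisjoint (branchCoords (X := X)) := by
  refine fun i _ i' _ hne => Set.disjoint_left.2 fun j hi hi' => hne ?_
  rcases List.suffix_or_suffix_of_suffix hi hi' with h | h <;>
    simpa [eq_comm] using h.eq_of_length_le (by simp)

end Coordinates

variable {X : Type*} [MeasurableSpace X] {p : X → X → ℝ} {μ : X → ℕ → ℝ}
  {Ω : Type*} [MeasurableSpace Ω] {Pm : Measure Ω} (M : BMC X p μ Ω Pm)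

def sample (ω : Ω) : BranchingSample X := fun j => (M.step j.1 j.2 ω, M.cnt j.1 j.2 ω)

lemma pos_eq_sample_pos (x : X) (ω : Ω) : ∀ u, M.pos x u ω = (M.sample ω).pos x u
  | [] => rfl
  | i :: u => by rw [pos, BranchingSample.pos, pos_eq_sample_pos x ω u]; rfl

lemma alive_iff_sample_alive (x : X) (ω : Ω) : ∀ u, M.alive x u ω ↔ (M.sample ω).alive x u
  | [] => Iff.rfl
  | i :: u => by
    rw [alive, BranchingSample.alive, alive_iff_sample_alive x ω u, pos_eq_sample_pos]; rfl

lemma preimage_sample_avoids_zero (w y : X) :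
    M.sample ⁻¹' avoids 0 w y = {ω | ∀ u, M.alive y u ω → M.pos y u ω ≠ w} := by
  ext ω
  simp [avoids, alive_iff_sample_alive, pos_eq_sample_pos]

lemma measurable_sample_shift (v : List ℕ) : Measurable fun ω => (M.sample ω).shift v :=
  measurable_pi_lambda _ fun _ => (M.meas_step _ _).prodMk (M.meas_cnt _ _)

lemma measurable_sample : Measurable M.sample := by
  simpa only [shift_nil] using M.measurable_sample_shift []

noncomputable def avoidProb (n : ℕ) (w y : X) : ℝ≥0∞ :=
  Pm (M.sample ⁻¹' avoids n w y)

lemma avoidProb_zero_self (w : X) : M.avoidProb 0 w w = 0 := by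
  rw [avoidProb, Set.eq_empty_of_forall_notMem fun ω (h : ω ∈ M.sample ⁻¹' avoids 0 w w) =>
    h [] trivial le_rfl rfl, measure_empty]

lemma avoidProb_zero_eq_one {w z : X} (h : z ≠ w) : M.avoidProb 0 w z = M.avoidProb 1 w z := by
  rw [avoidProb, avoidProb, avoids_zero_eq_avoids_one h]

def coord (j : (List ℕ × X) × Bool) (ω : Ω) : X ⊕ ℕ :=
  cond j.2 (.inr (M.cnt j.1.1 j.1.2 ω)) (.inl (M.step j.1.1 j.1.2 ω))

lemma measurable_coord (j : (List ℕ × X) × Bool) : Measurable (M.coord j) := by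
  rcases j with ⟨j, _ | _⟩
  · exact measurable_inl.comp (M.meas_step _ _)
  · exact measurable_inr.comp (M.meas_cnt _ _)

abbrev blockSigma (T : Set ((List ℕ × X) × Bool)) : MeasurableSpace Ω :=
  ⨆ j ∈ T, MeasurableSpace.comap (M.coord j) inferInstance

lemma blockSigma_le (T : Set ((List ℕ × X) × Bool)) : M.blockSigma T ≤ ‹MeasurableSpace Ω› :=
  iSup₂_le fun j _ => (M.measurable_coord j).comap_le

lemma blockSigma_mono {T₁ T₂ : Set ((List ℕ × X) × Bool)} (h : T₁ ⊆ T₂) :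
    M.blockSigma T₁ ≤ M.blockSigma T₂ :=
  biSup_mono fun _ hj => h hj

lemma measurable_coord_blockSigma {T : Set ((List ℕ × X) × Bool)} {j : (List ℕ × X) × Bool}
    (hj : j ∈ T) : Measurable[M.blockSigma T] (M.coord j) :=
  (comap_measurable (M.coord j)).mono (le_biSup (fun j => MeasurableSpace.comap (M.coord j) _) hj)
    le_rfl

lemma measurable_step_blockSigma {T : Set ((List ℕ × X) × Bool)} {u : List ℕ} {x : X}
    (h : ((u, x), false) ∈ T) : Measurable[M.blockSigma T] (M.step u x) :=
  (measurable_id.sumElim (measurable_const (a := x))).comp (M.measurable_coord_blockSigma h)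

lemma measurable_cnt_blockSigma {T : Set ((List ℕ × X) × Bool)} {u : List ℕ} {x : X}
    (h : ((u, x), true) ∈ T) : Measurable[M.blockSigma T] (M.cnt u x) :=
  ((measurable_const (a := 0)).sumElim measurable_id).comp (M.measurable_coord_blockSigma h)

section Law

lemma map_step [∀ x, IsProbabilityMeasure (rowMeasure (μ x))] (u : List ℕ) (x : X) :
    Pm.map (M.step u x) = rowMeasure (p x) := by
  rw [show M.step u x = Prod.fst ∘ fun ω => (M.step u x ω, M.cnt u x ω) from rfl,
    ← Measure.map_map measurable_fst ((M.meas_step u x).prodMk (M.meas_cnt u x)), M.law,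
    Measure.map_fst_prod, measure_univ, one_smul]

lemma map_cnt [∀ x, IsProbabilityMeasure (rowMeasure (p x))] (u : List ℕ) (x : X) :
    Pm.map (M.cnt u x) = rowMeasure (μ x) := by
  rw [show M.cnt u x = Prod.snd ∘ fun ω => (M.step u x ω, M.cnt u x ω) from rfl,
    ← Measure.map_map measurable_snd ((M.meas_step u x).prodMk (M.meas_cnt u x)), M.law,
    Measure.map_snd_prod, measure_univ, one_smul]

lemma measure_step_eq [MeasurableSingletonClass X] [∀ x, IsProbabilityMeasure (rowMeasure (μ x))]
    (u : List ℕ) (x y : X) : Pm (M.step u x ⁻¹' {y}) = ENNReal.ofReal (p x y) := by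
  rw [← rowMeasure_singleton, ← M.map_step u x,
    Measure.map_apply (M.meas_step u x) (measurableSet_singleton y)]

lemma measure_cnt_eq [∀ x, IsProbabilityMeasure (rowMeasure (p x))] (u : List ℕ) (x : X) (k : ℕ) :
    Pm (M.cnt u x ⁻¹' {k}) = ENNReal.ofReal (μ x k) := by
  rw [← rowMeasure_singleton, ← M.map_cnt u x,
    Measure.map_apply (M.meas_cnt u x) (measurableSet_singleton k)]

lemma tsum_mul_avoidProb_le_one [IsProbabilityMeasure Pm]
    [∀ x, IsProbabilityMeasure (rowMeasure (p x))] (n : ℕ) (w z : X) :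
    ∑' y, ENNReal.ofReal (p z y) * M.avoidProb n w y ≤ 1 :=
  (ENNReal.tsum_le_tsum fun _ => mul_le_of_le_one_right' prob_le_one).trans
    (tsum_ofReal_eq_one (p z)).le

lemma map_sample_shift (v : List ℕ) :
    Pm.map (fun ω => (M.sample ω).shift v) =
      Measure.infinitePi fun j : List ℕ × X => (rowMeasure (p j.2)).prod (rowMeasure (μ j.2)) := by
  have hinj : Function.Injective fun j : List ℕ × X => (j.1 ++ v, j.2) := fun a b h => by
    simp only [Prod.mk.injEq, List.append_cancel_right_eq] at h
    exact Prod.ext h.1 h.2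
  have h := (M.indep.precomp hinj).map_fun_eq_infinitePi_map
    fun j => (M.meas_step _ _).prodMk (M.meas_cnt _ _)
  simp only [M.law] at h
  exact h

lemma measure_preimage_sample_shift (v : List ℕ) {E : Set (BranchingSample X)}
    (hE : MeasurableSet E) :
    Pm ((fun ω => (M.sample ω).shift v) ⁻¹' E) = Pm (M.sample ⁻¹' E) := by
  calc Pm ((fun ω => (M.sample ω).shift v) ⁻¹' E)
      = Pm ((fun ω => (M.sample ω).shift []) ⁻¹' E) := by
        rw [← Measure.map_apply (M.measurable_sample_shift v) hE,
          ← Measure.map_apply (M.measurable_sample_shift []) hE, map_sample_shift, map_sample_shift]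
    _ = Pm (M.sample ⁻¹' E) := by simp only [shift_nil]

variable [IsProbabilityMeasure Pm] [∀ x, IsProbabilityMeasure (rowMeasure (p x))]
  [∀ x, IsProbabilityMeasure (rowMeasure (μ x))]

lemma indepFun_step_cnt (u : List ℕ) (x : X) : IndepFun (M.step u x) (M.cnt u x) Pm := by
  rw [indepFun_iff_map_prod_eq_prod_map_map (M.meas_step u x).aemeasurable
    (M.meas_cnt u x).aemeasurable, M.law, map_step, map_cnt]

lemma iIndepFun_coord : iIndepFun M.coord Pm :=
  iIndepFun_uncurry' (X := fun j b => M.coord (j, b)) (fun j b => M.measurable_coord (j, b))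
    (M.indep.comp (fun _ q b => cond b (Sum.inr q.2) (Sum.inl q.1))
      fun _ => measurable_pi_lambda _ fun b => by
        cases b
        exacts [measurable_inl.comp measurable_fst, measurable_inr.comp measurable_snd])
    fun j => iIndepFun_cond ((M.indepFun_step_cnt j.1 j.2).comp measurable_inl measurable_inr)

lemma measure_inter_eq_mul_of_disjoint {T₁ T₂ : Set ((List ℕ × X) × Bool)} (hd : Disjoint T₁ T₂)
    {A B : Set Ω} (hA : MeasurableSet[M.blockSigma T₁] A) (hB : MeasurableSet[M.blockSigma T₂] B) :
    Pm (A ∩ B) = Pm A * Pm B :=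
  ((indep_iSup_of_disjoint (fun j => (M.measurable_coord j).comap_le)
    ((iIndepFun_iff_iIndep _ _ _).1 M.iIndepFun_coord) hd).indepSet_of_measurableSet hA hB
    ).measure_inter_eq_mul

lemma measure_biInter_eq_prod {κ : Type*} (s : Finset κ) {T : κ → Set ((List ℕ × X) × Bool)}
    (hd : (s : Set κ).PairwiseDisjoint T) {A : κ → Set Ω}
    (hA : ∀ i ∈ s, MeasurableSet[M.blockSigma (T i)] (A i)) :
    Pm (⋂ i ∈ s, A i) = ∏ i ∈ s, Pm (A i) := by
  classical
  induction s using Finset.induction_on with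
  | empty => simp
  | insert a s ha ih =>
    simp only [Finset.coe_insert, Set.pairwiseDisjoint_insert] at hd
    rw [Finset.set_biInter_insert, Finset.prod_insert ha,
      M.measure_inter_eq_mul_of_disjoint (T₂ := ⋃ i ∈ s, T i) ?_
        (hA a (Finset.mem_insert_self a s)), ih hd.1 fun i hi => hA i (Finset.mem_insert_of_mem hi)]
    · exact .biInter s.countable_toSet fun i hi => M.blockSigma_mono
        (Set.subset_biUnion_of_mem (u := T) hi) _ (hA i (Finset.mem_insert_of_mem hi))
    · exact Set.disjoint_iUnion₂_right.2 fun i hi => hd.2 i hi fun h => ha (h ▸ hi)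

end Law

section Avoidance

variable [Countable X] [MeasurableSingletonClass X]

lemma measurableSet_shift_avoids (v : List ℕ) (n : ℕ) (w y : X) :
    MeasurableSet[M.blockSigma (subtreeCoords v)]
      ((fun ω => (M.sample ω).shift v) ⁻¹' avoids n w y) :=
  measurableSet_preimage_avoids
    (fun u _ hu => M.measurable_step_blockSigma (T := subtreeCoords v)
      ⟨List.suffix_append u v,
        fun h => absurd (List.append_cancel_right (h.trans (List.nil_append v).symm)) hu⟩)
    (fun u _ => M.measurable_cnt_blockSigma (T := subtreeCoords v)
      ⟨List.suffix_append u v, fun _ => rfl⟩) n w y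

lemma measurableSet_isFirstVisit (z y : X) (v : List ℕ) :
    MeasurableSet[M.blockSigma (lowCoords v.length)] {ω | (M.sample ω).IsFirstVisit z y v} :=
  BranchingSample.measurableSet_isFirstVisit
    (fun _ _ _ hu => M.measurable_step_blockSigma (hu.lt_or_eq.imp id (⟨·, rfl⟩)))
    (fun _ _ hu => M.measurable_cnt_blockSigma (.inl hu)) z y le_rfl

lemma alpha_eq_one_of_avoidProb_eq_zero [IsProbabilityMeasure Pm] {x : X}
    (h : ∀ n, M.avoidProb n x x = 0) : M.alpha x = 1 := by
  have hsub : (⋃ n, M.sample ⁻¹' avoids n x x)ᶜ ⊆ M.visitsInf x x := by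
    intro ω hω hfin
    simp only [Set.compl_iUnion, Set.mem_iInter, Set.mem_compl_iff] at hω
    obtain ⟨N, hN⟩ := (hfin.image List.length).bddAbove
    obtain ⟨u, hu, hlen, hpos⟩ : ∃ u, (M.sample ω).alive x u ∧ N + 1 ≤ u.length ∧
        (M.sample ω).pos x u = x := by
      simpa [avoids] using hω (N + 1)
    have hvisit : M.alive x u ω ∧ M.pos x u ω = x :=
      ⟨(M.alive_iff_sample_alive x ω u).2 hu, (M.pos_eq_sample_pos x ω u).trans hpos⟩
    exact absurd (hN (Set.mem_image_of_mem List.length hvisit)) (by omega)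
  have hmeas : MeasurableSet (⋃ n, M.sample ⁻¹' avoids n x x) :=
    .iUnion fun n => M.measurable_sample (measurableSet_avoids n x x)
  have hone : Pm (M.visitsInf x x) = 1 := le_antisymm prob_le_one <|
    calc 1 = Pm (⋃ n, M.sample ⁻¹' avoids n x x)ᶜ := by
          rw [prob_compl_eq_one_sub hmeas, measure_iUnion_null h, tsub_zero]
      _ ≤ Pm (M.visitsInf x x) := measure_mono hsub
  rw [alpha, hone, ENNReal.toReal_one]

variable [IsProbabilityMeasure Pm] [∀ x, IsProbabilityMeasure (rowMeasure (p x))]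
  [∀ x, IsProbabilityMeasure (rowMeasure (μ x))]

lemma measure_child_subtree_avoids (i n : ℕ) (w z : X) :
    Pm {ω | (M.sample ω).shift [i] ∈ avoids n w (M.step [i] z ω)} =
      ∑' y, ENNReal.ofReal (p z y) * M.avoidProb n w y := by
  have hdec : {ω | (M.sample ω).shift [i] ∈ avoids n w (M.step [i] z ω)} =
      ⋃ y, M.step [i] z ⁻¹' {y} ∩ (fun ω => (M.sample ω).shift [i]) ⁻¹' avoids n w y := by
    ext ω
    simp only [Set.mem_ofPred_eq, Set.mem_iUnion, Set.mem_inter_iff, Set.mem_preimage,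
      Set.mem_singleton_iff, exists_eq_left']
  have hdisj : Disjoint {(([i], z), false)} (subtreeCoords (X := X) [i]) :=
    Set.disjoint_singleton_left.2 fun h => Bool.false_ne_true (h.2 rfl)
  rw [hdec, measure_iUnion ?_ ?_]
  · refine tsum_congr fun y => ?_
    rw [M.measure_inter_eq_mul_of_disjoint hdisj
        (M.measurable_step_blockSigma (T := {(([i], z), false)}) rfl (measurableSet_singleton y))
        (M.measurableSet_shift_avoids [i] n w y),
      M.measure_step_eq, M.measure_preimage_sample_shift _ (measurableSet_avoids n w y),
      avoidProb]
  · exact fun y y' hne => Set.disjoint_left.2 fun ω h h' => hne (h.1.symm.trans h'.1)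
  · exact fun y => ((M.meas_step _ _) (measurableSet_singleton y)).inter
      ((M.measurable_sample_shift _) (measurableSet_avoids n w y))

/-- Condition on the number of children of the root: their subtrees are independent copies
of the whole tree, started at the children's positions. -/
theorem avoidProb_succ (n : ℕ) (w z : X) :
    M.avoidProb (n + 1) w z =
      ∑' k, ENNReal.ofReal (μ z k) * (∑' y, ENNReal.ofReal (p z y) * M.avoidProb n w y) ^ k := by
  set child : ℕ → Set Ω := fun i => {ω | (M.sample ω).shift [i] ∈ avoids n w (M.step [i] z ω)}
  have hdec : M.sample ⁻¹' avoids (n + 1) w z =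
      ⋃ k, M.cnt [] z ⁻¹' {k} ∩ ⋂ i ∈ Finset.range k, child i := by
    ext ω
    simp [mem_avoids_succ_iff, sample, child]
  have hchild : ∀ i, MeasurableSet[M.blockSigma (branchCoords i)] (child i) := fun i =>
    measurableSet_apply_of_countable
      (M.measurable_step_blockSigma (T := branchCoords i) List.suffix_rfl) fun y =>
        M.blockSigma_mono (fun _ hj => hj.1) _ (M.measurableSet_shift_avoids [i] n w y)
  rw [avoidProb, hdec, measure_iUnion ?_ ?_]
  rotate_left
  · exact fun k k' hne => Set.disjoint_left.2 fun ω h h' => hne (h.1.symm.trans h'.1)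
  · exact fun k => ((M.meas_cnt _ _) (measurableSet_singleton k)).inter
      (Finset.measurableSet_biInter _ fun i _ => M.blockSigma_le _ _ (hchild i))
  refine tsum_congr fun k => ?_
  have hroot : Disjoint {(([], z), true)} (⋃ i ∈ Finset.range k, branchCoords (X := X) i) :=
    Set.disjoint_singleton_left.2 (by simp [branchCoords])
  rw [M.measure_inter_eq_mul_of_disjoint hroot
      (M.measurable_cnt_blockSigma (T := {(([], z), true)}) rfl (measurableSet_singleton k))
      (Finset.measurableSet_biInter _ fun i hi => M.blockSigma_mono
        (Set.subset_biUnion_of_mem (u := branchCoords) hi) _ (hchild i)),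
    M.measure_biInter_eq_prod _ (pairwiseDisjoint_branchCoords _) fun i _ => hchild i,
    Finset.prod_congr rfl fun i _ => M.measure_child_subtree_avoids i n w z,
    Finset.prod_const, Finset.card_range, M.measure_cnt_eq]

/-- Strong Markov property at the first visit to `y`. -/
lemma avoidProb_le_add (w y z : X) :
    M.avoidProb 0 w z ≤ M.avoidProb 0 y z + M.avoidProb 0 w y := by
  set first : List ℕ → Set Ω := fun v => {ω | (M.sample ω).IsFirstVisit z y v}
  have hsub : M.sample ⁻¹' avoids 0 w z ⊆ M.sample ⁻¹' avoids 0 y z ∪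
      ⋃ v, first v ∩ (fun ω => (M.sample ω).shift v) ⁻¹' avoids 0 w y := fun ω hω =>
    (mem_avoids_or_exists_isFirstVisit _ hω y).imp id fun ⟨v, hv, hshift⟩ =>
      Set.mem_iUnion.2 ⟨v, hv, hshift⟩
  calc M.avoidProb 0 w z
      ≤ M.avoidProb 0 y z +
          ∑' v, Pm (first v ∩ (fun ω => (M.sample ω).shift v) ⁻¹' avoids 0 w y) :=
        (measure_mono hsub).trans ((measure_union_le _ _).trans
          (add_le_add le_rfl (measure_iUnion_le _)))
    _ = M.avoidProb 0 y z + (∑' v, Pm (first v)) * M.avoidProb 0 w y := by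
        rw [← ENNReal.tsum_mul_right]
        congr 1
        refine tsum_congr fun v => ?_
        rw [M.measure_inter_eq_mul_of_disjoint (disjoint_lowCoords_subtreeCoords v)
            (M.measurableSet_isFirstVisit z y v) (M.measurableSet_shift_avoids v 0 w y),
          M.measure_preimage_sample_shift v (measurableSet_avoids 0 w y), avoidProb]
    _ ≤ M.avoidProb 0 y z + M.avoidProb 0 w y := by
        rw [← measure_iUnion (fun v v' hne => Set.disjoint_left.2 fun ω h h' => hne (h.eq h'))
          fun v => M.blockSigma_le _ _ (M.measurableSet_isFirstVisit z y v)]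
        gcongr
        exact mul_le_of_le_one_left' prob_le_one

lemma avoidProb_eq_zero_of_forall_avoidProb_zero (hμzero : ∀ x, μ x 0 = 0) {w : X}
    (h : ∀ z, M.avoidProb 0 w z = 0) (n : ℕ) : ∀ z, M.avoidProb n w z = 0 := by
  induction n with
  | zero => exact h
  | succ n ih =>
    intro z
    rw [avoidProb_succ, ENNReal.tsum_eq_zero]
    rintro (_ | k) <;> simp [ih, hμzero]

/-- Avoiding `w` is likeliest from `y`, so its probability `a` from `y` satisfies
`a ≤ Ψ(y, P a) ≤ (1 - p y w) a`. -/
lemma avoidProb_eq_zero_of_edge (hμzero : ∀ x, μ x 0 = 0) {y w : X}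
    (hy : ∀ z, M.avoidProb 0 y z = 0) (hyw : 0 < p y w) (z : X) : M.avoidProb 0 w z = 0 := by
  have hle : ∀ z, M.avoidProb 0 w z ≤ M.avoidProb 0 w y := fun z => by
    simpa [hy z] using M.avoidProb_le_add w y z
  suffices M.avoidProb 0 w y = 0 from le_antisymm (this ▸ hle z) zero_le
  rcases eq_or_ne y w with rfl | hne
  · exact M.avoidProb_zero_self y
  have ha : M.avoidProb 0 w y ≤ ∑' x, ENNReal.ofReal (p y x) * M.avoidProb 0 w x := by
    rw [M.avoidProb_zero_eq_one hne, avoidProb_succ]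
    exact ENNReal.tsum_mul_pow_le_self (by simp [hμzero]) (tsum_ofReal_eq_one (μ y))
      (M.tsum_mul_avoidProb_le_one 0 w y)
  rw [ENNReal.tsum_eq_add_tsum_ite w] at ha
  simp only [M.avoidProb_zero_self, mul_zero, zero_add] at ha
  set a := M.avoidProb 0 w y
  have hq : a + ENNReal.ofReal (p y w) * a ≤ a + 0 :=
    calc a + ENNReal.ofReal (p y w) * a
        ≤ (∑' x, if x = w then 0 else ENNReal.ofReal (p y x) * a) + ENNReal.ofReal (p y w) * a :=
          add_le_add (ha.trans (ENNReal.tsum_le_tsum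
            (g := fun x => if x = w then 0 else ENNReal.ofReal (p y x) * a) fun x => by
            split_ifs
            exacts [le_rfl, mul_le_mul' le_rfl (hle x)])) le_rfl
      _ = a + 0 := by
          rw [add_comm, ← ENNReal.tsum_eq_add_tsum_ite (f := fun x => ENNReal.ofReal (p y x) * a) w,
            ENNReal.tsum_mul_right, tsum_ofReal_eq_one, one_mul, add_zero]
  have hca := le_antisymm (ENNReal.le_of_add_le_add_left (measure_ne_top _ _) hq) zero_le
  exact (mul_eq_zero.1 hca).resolve_left (ENNReal.ofReal_pos.2 hyw).ne'
theorem alpha_eq_one_of_forall_avoidProb_eq_zero (hp0 : ∀ x y, 0 ≤ p x y)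
    (hirred : ∀ x y, ∃ k, 0 < kpow p k x y) (hμzero : ∀ x, μ x 0 = 0) {o : X}
    (ho : ∀ z, M.avoidProb 0 o z = 0) (x : X) : M.alpha x = 1 := by
  obtain ⟨k, hk⟩ := hirred o x
  have hx : ∀ z, M.avoidProb 0 x z = 0 := by
    have hpath := reflTransGen_of_kpow_pos hp0 hk
    clear hk
    induction hpath with
    | refl => exact ho
    | tail _ hbc ih => exact M.avoidProb_eq_zero_of_edge hμzero ih hbc
  exact M.alpha_eq_one_of_avoidProb_eq_zero fun n =>
    M.avoidProb_eq_zero_of_forall_avoidProb_zero hμzero hx n x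

lemma toReal_avoidProb_zero_eq_tsum (hp0 : ∀ x y, 0 ≤ p x y) (hμ0 : ∀ x k, 0 ≤ μ x k) {o x : X}
    (hx : x ≠ o) :
    (M.avoidProb 0 o x).toReal =
      ∑' k, (∑' y, p x y * (M.avoidProb 0 o y).toReal) ^ k * μ x k := by
  have hq : ∑' y, ENNReal.ofReal (p x y) * M.avoidProb 0 o y ≠ ∞ :=
    ne_top_of_le_ne_top ENNReal.one_ne_top (M.tsum_mul_avoidProb_le_one 0 o x)
  rw [M.avoidProb_zero_eq_one hx, avoidProb_succ,
    ENNReal.tsum_toReal_eq fun _ =>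
      ENNReal.mul_ne_top ENNReal.ofReal_ne_top (ENNReal.pow_ne_top hq)]
  refine tsum_congr fun k => ?_
  rw [ENNReal.toReal_mul, ENNReal.toReal_pow, ENNReal.toReal_ofReal (hμ0 x k), mul_comm,
    ENNReal.tsum_toReal_eq (f := fun y => ENNReal.ofReal (p x y) * M.avoidProb 0 o y)
      fun y => ENNReal.mul_ne_top ENNReal.ofReal_ne_top (measure_ne_top _ _)]
  simp only [ENNReal.toReal_mul, ENNReal.toReal_ofReal (hp0 x _)]

end Avoidance

end BMC

/-- Menshikov–Volkov criterion, easy direction: if the BMC is not strongly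
recurrent and `g(x)` is the probability that no particle starting from `x` ever visits `o`
(with `g(o) := 0`), then `g` is positive somewhere and satisfies `Ψ(x, Pg(x)) ≥ g(x)` for
all `x ≠ o`. -/
theorem bmc_not_strongly_recurrent_superharmonic
    {X : Type*} [Countable X] [MeasurableSpace X] [MeasurableSingletonClass X]
    (p : X → X → ℝ) (μ : X → ℕ → ℝ)
    (hp0 : ∀ x y, 0 ≤ p x y) (hp1 : ∀ x, HasSum (p x) 1)
    (hirred : ∀ x y, ∃ k : ℕ, 0 < kpow p k x y)
    (hμ0 : ∀ x k, 0 ≤ μ x k) (hμsum : ∀ x, HasSum (μ x) 1) (hμzero : ∀ x, μ x 0 = 0)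
    {Ω : Type*} [MeasurableSpace Ω] (Pm : Measure Ω) [IsProbabilityMeasure Pm]
    (M : BMC X p μ Ω Pm)
    (hns : ¬ ∀ x, M.alpha x = 1)
    (o : X) (g : X → ℝ)
    (hg : ∀ x, g x = if x = o then 0
      else (Pm {ω | ∀ u : List ℕ, M.alive x u ω → M.pos x u ω ≠ o}).toReal) :
    (∃ y, 0 < g y ∧ g y ≤ 1) ∧
    (∀ x, x ≠ o →
      g x ≤ ∑' k : ℕ, (∑' y : X, p x y * g y) ^ k * μ x k) := by
  have hp : ∀ x, IsProbabilityMeasure (rowMeasure (p x)) := fun x =>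
    isProbabilityMeasure_rowMeasure (hp0 x) (hp1 x)
  have hμ : ∀ x, IsProbabilityMeasure (rowMeasure (μ x)) := fun x =>
    isProbabilityMeasure_rowMeasure (hμ0 x) (hμsum x)
  have hg' : ∀ y, g y = (M.avoidProb 0 o y).toReal := fun y => by
    rw [hg y]
    split_ifs with hy
    · rw [hy, M.avoidProb_zero_self, ENNReal.toReal_zero]
    · rw [BMC.avoidProb, BMC.preimage_sample_avoids_zero]
  have hg_le : ∀ y, g y ≤ 1 := fun y => (hg' y).trans_le measureReal_le_one
  refine ⟨?_, fun x hx => (hg' x).trans_le ?_⟩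
  · by_contra! hzero
    refine hns (M.alpha_eq_one_of_forall_avoidProb_eq_zero hp0 hirred hμzero (o := o) fun z => ?_)
    have hgz : g z ≤ 0 := not_lt.1 fun hpos => (hzero z hpos).not_ge (hg_le z)
    rw [hg'] at hgz
    exact ((ENNReal.toReal_eq_zero_iff _).1 (le_antisymm hgz ENNReal.toReal_nonneg)).resolve_right
      (measure_ne_top _ _)
  · simp only [hg']
    exact (M.toReal_avoidProb_zero_eq_tsum hp0 hμ0 hx).le
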